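/- Let μ be a Borel probability measure on ℝⁿ with compact support and let m be an integer with 1 ≤ m ≤ n. If m ≤ D(μ), where D(μ) = inf_{θ∈(0,1)} dim_{P,θ}^n μ is the critical point of μ, then dim_P^m μ = m. -/

import Mathlib

open MeasureTheory Metric Filter Set Topology
open scoped ENNReal

noncomputable section
open scoped Classical

/-- The support of a Borel measure `μ`: the set of points all of whose
neighborhoods have positive measure. -/
def msupp {n : ℕ} (μ : Measure (EuclideanSpace ℝ (Fin n))) :
    Set (EuclideanSpace ℝ (Fin n)) :=
  {x | ∀ r : ℝ, 0 < r → 0 < μ (Metric.ball x r)}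

/-- The Assouad dimension of a set `E ⊆ ℝⁿ`: the infimum of all `s ≥ 0` for which
there is `C > 0` such that for all `0 < r < R` and `x ∈ E`, the set `E ∩ B(x,R)`
can be covered by at most `C (R/r)^s` balls of radius `r`. -/
def dimA {n : ℕ} (E : Set (EuclideanSpace ℝ (Fin n))) : ℝ :=
  sInf {s : ℝ | 0 ≤ s ∧ ∃ C : ℝ, 0 < C ∧ ∀ x ∈ E, ∀ r R : ℝ, 0 < r → r < R →
    ∃ F : Finset (EuclideanSpace ℝ (Fin n)), (F.card : ℝ) ≤ C * (R / r) ^ s ∧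
      E ∩ Metric.closedBall x R ⊆ ⋃ y ∈ F, Metric.closedBall y r}

/-- The packing dimension of a measure:
`dim_P μ = sup {t ≥ 0 : liminf_{r→0} μ(B(x,r))/r^t = 0 for μ-a.e. x}`. -/
def dimP {n : ℕ} (μ : Measure (EuclideanSpace ℝ (Fin n))) : ℝ :=
  sSup {t : ℝ | 0 ≤ t ∧ ∀ᵐ x ∂μ,
    Filter.liminf (fun r : ℝ =>
      μ (Metric.closedBall x r) / ENNReal.ofReal (r ^ t)) (𝓝[>] 0) = 0}

/-- The potential `F_m^μ(x,r) = ∫ min{1, r^m |x-y|^{-m}} dμ(y)`, with the convention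
that the integrand equals `1` when `y = x`. -/
def Fpot {n : ℕ} (m : ℝ) (μ : Measure (EuclideanSpace ℝ (Fin n)))
    (x : EuclideanSpace ℝ (Fin n)) (r : ℝ) : ℝ≥0∞ :=
  ∫⁻ y, ENNReal.ofReal (if y = x then 1 else min 1 (r ^ m * ‖x - y‖ ^ (-m))) ∂μ

/-- The `m`-dimensional packing dimension profile
`dim_P^m μ = sup {t ≥ 0 : liminf_{r→0} r^{-t} F_m^μ(x,r) = 0 for μ-a.e. x}`. -/
def dimPprofile {n : ℕ} (m : ℝ) (μ : Measure (EuclideanSpace ℝ (Fin n))) : ℝ :=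
  sSup {t : ℝ | 0 ≤ t ∧ ∀ᵐ x ∂μ,
    Filter.liminf (fun r : ℝ => Fpot m μ x r / ENNReal.ofReal (r ^ t)) (𝓝[>] 0) = 0}

/-- The potential
`F_{t,s,θ}^μ(x,r) = ∫ min{1, r^t |x-y|^{-t}, r^{θ(s-t)+t} |x-y|^{-s}} dμ(y)`,
with the convention that the integrand equals `1` when `y = x`. -/
def Ftheta {n : ℕ} (t s θ : ℝ) (μ : Measure (EuclideanSpace ℝ (Fin n)))
    (x : EuclideanSpace ℝ (Fin n)) (r : ℝ) : ℝ≥0∞ :=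
  ∫⁻ y, ENNReal.ofReal (if y = x then 1 else
    min (min 1 (r ^ t * ‖x - y‖ ^ (-t))) (r ^ (θ * (s - t) + t) * ‖x - y‖ ^ (-s))) ∂μ

/-- The `θ`-profile
`dim_{P,θ}^s μ = sup {t ∈ [0,s] : liminf_{r→0} r^{-t} F_{t,s,θ}^μ(x,r) = 0 for μ-a.e. x}`. -/
def dimPtheta {n : ℕ} (s θ : ℝ) (μ : Measure (EuclideanSpace ℝ (Fin n))) : ℝ :=
  sSup {t : ℝ | t ∈ Set.Icc 0 s ∧ ∀ᵐ x ∂μ,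
    Filter.liminf (fun r : ℝ => Ftheta t s θ μ x r / ENNReal.ofReal (r ^ t)) (𝓝[>] 0) = 0}

/-- The critical point `D(μ) = inf_{θ ∈ (0,1)} dim_{P,θ}^n μ` of a measure on `ℝⁿ`. -/
def Dcrit (n : ℕ) (μ : Measure (EuclideanSpace ℝ (Fin n))) : ℝ :=
  sInf ((fun θ : ℝ => dimPtheta (n : ℝ) θ μ) '' Set.Ioo 0 1)

/-! The upper bound holds for every nonzero measure: `F_m(x,r) ≥ μ(B(x,R)) (r/R)^m`, so
`r^{-t} F_m(x,r)` stays away from `0` as soon as `t ≥ m`.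

For the lower bound fix `t < m` and `θ ∈ (0,1)` with `t < (1-θ) m`. Since
`m ≤ D(μ) ≤ dim_{P,θ}^n μ`, some `t' > t` lies in the set defining `dim_{P,θ}^n μ`. Distinguishing
`ρ ≤ r`, `r < ρ ≤ r^θ` and `r^θ < ρ` gives the kernel inequality
`potKernel m r ρ ≤ max{1, r^{(1-θ)(m-t')}} · thetaKernel t' n θ r ρ + r^{(1-θ)m}`, hence
`r^{-t} F_m(x,r) ≤ r^{-t'} F_{t',n,θ}(x,r) + r^{(1-θ)m-t}` for `r ≤ 1`, and the liminf on the
left vanishes wherever the one on the right does. -/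

-- The integrands of `Fpot` and `Ftheta` off the diagonal, as functions of `ρ = ‖x - y‖`.
def potKernel (M r ρ : ℝ) : ℝ := min 1 (r ^ M * ρ ^ (-M))

def thetaKernel (t s θ r ρ : ℝ) : ℝ :=
  min (min 1 (r ^ t * ρ ^ (-t))) (r ^ (θ * (s - t) + t) * ρ ^ (-s))

lemma rpow_mul_rpow_neg {r ρ : ℝ} (hr : 0 ≤ r) (hρ : 0 ≤ ρ) (a : ℝ) :
    r ^ a * ρ ^ (-a) = (r / ρ) ^ a := by
  rw [Real.rpow_neg hρ, Real.div_rpow hr hρ, div_eq_mul_inv]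

lemma div_rpow_self_rpow {r : ℝ} (hr : 0 < r) (θ a : ℝ) :
    (r / r ^ θ) ^ a = r ^ ((1 - θ) * a) := by
  rw [Real.rpow_mul hr.le, Real.rpow_sub hr, Real.rpow_one]

lemma rpow_le_max_one_rpow {b q : ℝ} (hb : 0 < b) (hbq : b ≤ q) (hq : q ≤ 1) (a : ℝ) :
    q ^ a ≤ max 1 (b ^ a) := by
  rcases le_total 0 a with ha | ha
  · exact (Real.rpow_le_one (hb.le.trans hbq) hq ha).trans (le_max_left _ _)
  · exact (Real.rpow_le_rpow_of_nonpos hb hbq ha).trans (le_max_right _ _)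

lemma thetaKernel_nonneg {t s θ r ρ : ℝ} (hr : 0 ≤ r) (hρ : 0 ≤ ρ) :
    0 ≤ thetaKernel t s θ r ρ :=
  le_min (le_min zero_le_one (by positivity)) (by positivity)

lemma thetaKernel_eq_one {t s θ r ρ : ℝ} (ht : 0 ≤ t) (hts : t ≤ s) (hθ : θ ≤ 1)
    (hρ : 0 < ρ) (hρr : ρ ≤ r) (hr1 : r ≤ 1) : thetaKernel t s θ r ρ = 1 := by
  have hr : 0 < r := hρ.trans_le hρr
  have h1 : 1 ≤ r ^ t * ρ ^ (-t) := by
    rw [rpow_mul_rpow_neg hr.le hρ.le]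
    exact Real.one_le_rpow ((one_le_div hρ).2 hρr) ht
  have h2 : 1 ≤ r ^ (θ * (s - t) + t) * ρ ^ (-s) := calc
    (1 : ℝ) ≤ r ^ (θ * (s - t) + t - s) :=
      Real.one_le_rpow_of_pos_of_le_one_of_nonpos hr hr1 (by nlinarith)
    _ = r ^ (θ * (s - t) + t) * r ^ (-s) := by rw [sub_eq_add_neg, Real.rpow_add hr]
    _ ≤ r ^ (θ * (s - t) + t) * ρ ^ (-s) := mul_le_mul_of_nonneg_left
      (Real.rpow_le_rpow_of_nonpos hρ hρr (neg_nonpos.2 (ht.trans hts))) (by positivity)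
  rw [thetaKernel, min_eq_left h1, min_eq_left h2]

lemma thetaKernel_eq_div_rpow {t s θ r ρ : ℝ} (ht : 0 ≤ t) (hts : t ≤ s)
    (hr : 0 < r) (hrρ : r ≤ ρ) (hρθ : ρ ≤ r ^ θ) : thetaKernel t s θ r ρ = (r / ρ) ^ t := by
  have hρ : 0 < ρ := hr.trans_le hrρ
  have hq1 : (r / ρ) ^ t ≤ 1 := Real.rpow_le_one (by positivity) ((div_le_one hρ).2 hrρ) ht
  have hsplit : r ^ (θ * (s - t) + t) * ρ ^ (-s) = (r / ρ) ^ t * (r ^ θ / ρ) ^ (s - t) := by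
    rw [Real.div_rpow hr.le hρ.le, Real.div_rpow (by positivity) hρ.le, ← Real.rpow_mul hr.le,
      Real.rpow_add hr, Real.rpow_neg hρ.le, Real.rpow_sub hρ]
    field_simp
  have hfac : 1 ≤ (r ^ θ / ρ) ^ (s - t) :=
    Real.one_le_rpow ((one_le_div hρ).2 hρθ) (sub_nonneg.2 hts)
  rw [thetaKernel, rpow_mul_rpow_neg hr.le hρ.le, hsplit, min_eq_right hq1, min_eq_left]
  exact le_mul_of_one_le_right (by positivity) hfac

lemma potKernel_le_one (M r ρ : ℝ) : potKernel M r ρ ≤ 1 := min_le_left _ _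

lemma potKernel_le_div_rpow {M r ρ : ℝ} (hr : 0 ≤ r) (hρ : 0 ≤ ρ) :
    potKernel M r ρ ≤ (r / ρ) ^ M :=
  (min_le_right _ _).trans_eq (rpow_mul_rpow_neg hr hρ M)

lemma potKernel_le_mul_div_rpow {M t θ r ρ : ℝ} (hr : 0 < r) (hrρ : r ≤ ρ)
    (hρθ : ρ ≤ r ^ θ) :
    potKernel M r ρ ≤ max 1 (r ^ ((1 - θ) * (M - t))) * (r / ρ) ^ t := by
  have hρ : 0 < ρ := hr.trans_le hrρ
  have hq : 0 < r / ρ := div_pos hr hρ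
  have hlow : r / r ^ θ ≤ r / ρ := div_le_div_of_nonneg_left hr.le hρ hρθ
  calc potKernel M r ρ ≤ (r / ρ) ^ M := potKernel_le_div_rpow hr.le hρ.le
    _ = (r / ρ) ^ (M - t) * (r / ρ) ^ t := by rw [← Real.rpow_add hq, sub_add_cancel]
    _ ≤ max 1 ((r / r ^ θ) ^ (M - t)) * (r / ρ) ^ t := by
      gcongr
      exact rpow_le_max_one_rpow (by positivity) hlow ((div_le_one hρ).2 hrρ) _
    _ = max 1 (r ^ ((1 - θ) * (M - t))) * (r / ρ) ^ t := by rw [div_rpow_self_rpow hr]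

lemma potKernel_le_of_rpow_le {M θ r ρ : ℝ} (hM : 0 ≤ M) (hr : 0 < r) (hρθ : r ^ θ ≤ ρ) :
    potKernel M r ρ ≤ r ^ ((1 - θ) * M) := by
  have hρ : 0 < ρ := (Real.rpow_pos_of_pos hr θ).trans_le hρθ
  calc potKernel M r ρ ≤ (r / ρ) ^ M := potKernel_le_div_rpow hr.le hρ.le
    _ ≤ (r / r ^ θ) ^ M := by gcongr
    _ = r ^ ((1 - θ) * M) := div_rpow_self_rpow hr θ M

lemma potKernel_le_mul_thetaKernel_add {M t s θ r ρ : ℝ} (hM : 0 ≤ M) (ht : 0 ≤ t)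
    (hts : t ≤ s) (hθ : θ ≤ 1) (hr : 0 < r) (hr1 : r ≤ 1) (hρ : 0 < ρ) :
    potKernel M r ρ ≤
      max 1 (r ^ ((1 - θ) * (M - t))) * thetaKernel t s θ r ρ + r ^ ((1 - θ) * M) := by
  have hC : 1 ≤ max 1 (r ^ ((1 - θ) * (M - t))) := le_max_left _ _
  have hK := thetaKernel_nonneg (t := t) (s := s) (θ := θ) hr.le hρ.le
  have hrest : 0 ≤ r ^ ((1 - θ) * M) := by positivity
  rcases le_or_gt ρ r with hρr | hrρ
  · rw [thetaKernel_eq_one ht hts hθ hρ hρr hr1, mul_one]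
    linarith [potKernel_le_one M r ρ]
  rcases le_or_gt ρ (r ^ θ) with hρθ | hθρ
  · rw [thetaKernel_eq_div_rpow ht hts hr hrρ.le hρθ]
    linarith [potKernel_le_mul_div_rpow (M := M) (t := t) hr hrρ.le hρθ]
  · nlinarith [potKernel_le_of_rpow_le hM hr hθρ.le]

lemma max_one_rpow_mul_rpow_neg_le {M t t' θ r : ℝ} (hr : 0 < r) (hr1 : r ≤ 1)
    (htt' : t ≤ t') (ht' : 0 ≤ t') (hθ : 0 ≤ θ) (htM : t ≤ (1 - θ) * M) :
    max 1 (r ^ ((1 - θ) * (M - t'))) * r ^ (-t) ≤ r ^ (-t') := by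
  rw [max_mul_of_nonneg _ _ (by positivity), one_mul, ← Real.rpow_add hr]
  exact max_le (Real.rpow_le_rpow_of_exponent_ge hr hr1 (by linarith))
    (Real.rpow_le_rpow_of_exponent_ge hr hr1 (by nlinarith))

lemma div_ofReal_rpow (a : ℝ≥0∞) {r : ℝ} (hr : 0 < r) (t : ℝ) :
    a / ENNReal.ofReal (r ^ t) = a * ENNReal.ofReal (r ^ (-t)) := by
  rw [div_eq_mul_inv, ← ENNReal.ofReal_inv_of_pos (Real.rpow_pos_of_pos hr t),
    ← Real.rpow_neg hr.le]

lemma div_rpow_le_potKernel {M r R ρ : ℝ} (hM : 0 ≤ M) (hr : 0 < r) (hrR : r ≤ R)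
    (hρ : 0 < ρ) (hρR : ρ ≤ R) : (r / R) ^ M ≤ potKernel M r ρ := by
  have hR : 0 < R := hρ.trans_le hρR
  rw [potKernel, rpow_mul_rpow_neg hr.le hρ.le]
  exact le_min (Real.rpow_le_one (by positivity) ((div_le_one hR).2 hrR) hM)
    (Real.rpow_le_rpow (by positivity) (div_le_div_of_nonneg_left hr.le hρ hρR) hM)

section Potentials

variable {n : ℕ} {μ : Measure (EuclideanSpace ℝ (Fin n))} {x : EuclideanSpace ℝ (Fin n)}

lemma Fpot_le_mul_Ftheta_add [IsProbabilityMeasure μ] {M t s θ r : ℝ} (hM : 0 ≤ M)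
    (ht : 0 ≤ t) (hts : t ≤ s) (hθ : θ ≤ 1) (hr : 0 < r) (hr1 : r ≤ 1) :
    Fpot M μ x r ≤ ENNReal.ofReal (max 1 (r ^ ((1 - θ) * (M - t)))) * Ftheta t s θ μ x r
      + ENNReal.ofReal (r ^ ((1 - θ) * M)) := by
  set C := max 1 (r ^ ((1 - θ) * (M - t)))
  have hC : 1 ≤ C := le_max_left _ _
  calc Fpot M μ x r ≤ ∫⁻ y, (ENNReal.ofReal C *
        ENNReal.ofReal (if y = x then 1 else thetaKernel t s θ r ‖x - y‖)
        + ENNReal.ofReal (r ^ ((1 - θ) * M))) ∂μ := by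
        refine lintegral_mono fun y => ?_
        by_cases hyx : y = x
        · simp only [hyx, if_true, ENNReal.ofReal_one, mul_one]
          exact le_add_right (ENNReal.one_le_ofReal.2 hC)
        · have hρ : 0 < ‖x - y‖ := norm_pos_iff.2 (sub_ne_zero.2 (Ne.symm hyx))
          simp only [hyx, if_false]
          rw [← ENNReal.ofReal_mul (by linarith), ← ENNReal.ofReal_add
            (mul_nonneg (by linarith) (thetaKernel_nonneg hr.le hρ.le)) (by positivity)]
          exact ENNReal.ofReal_le_ofReal
            (potKernel_le_mul_thetaKernel_add hM ht hts hθ hr hr1 hρ)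
    _ = _ := by
        rw [lintegral_add_right _ measurable_const,
          lintegral_const_mul' _ _ ENNReal.ofReal_ne_top, lintegral_const, measure_univ,
          mul_one]
        rfl

lemma Fpot_div_le [IsProbabilityMeasure μ] {M t t' s θ r : ℝ} (hM : 0 ≤ M) (ht' : 0 ≤ t')
    (ht's : t' ≤ s) (hθ0 : 0 ≤ θ) (hθ1 : θ ≤ 1) (htt' : t ≤ t') (htM : t ≤ (1 - θ) * M)
    (hr : 0 < r) (hr1 : r ≤ 1) :
    Fpot M μ x r / ENNReal.ofReal (r ^ t) ≤
      Ftheta t' s θ μ x r / ENNReal.ofReal (r ^ t') + ENNReal.ofReal (r ^ ((1 - θ) * M - t)) := by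
  have hscale := max_one_rpow_mul_rpow_neg_le (M := M) hr hr1 htt' ht' hθ0 htM
  rw [div_ofReal_rpow _ hr, div_ofReal_rpow _ hr, sub_eq_add_neg, Real.rpow_add hr,
    ENNReal.ofReal_mul (by positivity)]
  calc Fpot M μ x r * ENNReal.ofReal (r ^ (-t))
      ≤ (ENNReal.ofReal (max 1 (r ^ ((1 - θ) * (M - t')))) * Ftheta t' s θ μ x r
          + ENNReal.ofReal (r ^ ((1 - θ) * M))) * ENNReal.ofReal (r ^ (-t)) := by
        gcongr
        exact Fpot_le_mul_Ftheta_add hM ht' ht's hθ1 hr hr1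
    _ = Ftheta t' s θ μ x r *
          ENNReal.ofReal (max 1 (r ^ ((1 - θ) * (M - t'))) * r ^ (-t))
          + ENNReal.ofReal (r ^ ((1 - θ) * M)) * ENNReal.ofReal (r ^ (-t)) := by
        rw [ENNReal.ofReal_mul (by positivity)]
        ring
    _ ≤ _ := by gcongr

lemma liminf_Fpot_div_eq_zero [IsProbabilityMeasure μ] {M t t' s θ : ℝ} (hM : 0 ≤ M)
    (ht' : 0 ≤ t') (ht's : t' ≤ s) (hθ0 : 0 ≤ θ) (hθ1 : θ ≤ 1) (htt' : t ≤ t')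
    (htM : t < (1 - θ) * M)
    (hx : liminf (fun r => Ftheta t' s θ μ x r / ENNReal.ofReal (r ^ t')) (𝓝[>] 0) = 0) :
    liminf (fun r => Fpot M μ x r / ENNReal.ofReal (r ^ t)) (𝓝[>] 0) = 0 := by
  have hvanish : Tendsto (fun r : ℝ => ENNReal.ofReal (r ^ ((1 - θ) * M - t))) (𝓝[>] 0)
      (𝓝 0) := by
    have h := (Real.continuousAt_rpow_const 0 ((1 - θ) * M - t) (Or.inr (by linarith))).tendsto
    rw [Real.zero_rpow (by linarith)] at h
    simpa using ENNReal.tendsto_ofReal (h.mono_left nhdsWithin_le_nhds)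
  have hle : ∀ᶠ r in 𝓝[>] (0 : ℝ), Fpot M μ x r / ENNReal.ofReal (r ^ t) ≤
      Ftheta t' s θ μ x r / ENNReal.ofReal (r ^ t') + ENNReal.ofReal (r ^ ((1 - θ) * M - t)) := by
    filter_upwards [Ioo_mem_nhdsGT one_pos] with r hr
    exact Fpot_div_le hM ht' ht's hθ0 hθ1 htt' htM.le hr.1 hr.2.le
  refine nonpos_iff_eq_zero.1 ((liminf_le_liminf hle).trans ?_)
  exact (ENNReal.liminf_add_of_right_tendsto_zero hvanish _).trans_le hx.le

lemma measure_ball_mul_le_Fpot {M r R : ℝ} (hM : 0 ≤ M) (hr : 0 < r) (hrR : r ≤ R) :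
    μ (ball x R) * ENNReal.ofReal ((r / R) ^ M) ≤ Fpot M μ x r := by
  rw [mul_comm, ← lintegral_indicator_const measurableSet_ball, Fpot]
  refine lintegral_mono fun y => ?_
  by_cases hy : y ∈ ball x R
  · rw [indicator_of_mem hy]
    refine ENNReal.ofReal_le_ofReal ?_
    split_ifs with hyx
    · exact Real.rpow_le_one (div_nonneg hr.le (hr.le.trans hrR))
        ((div_le_one (hr.trans_le hrR)).2 hrR) hM
    · refine div_rpow_le_potKernel hM hr hrR (norm_pos_iff.2 (sub_ne_zero.2 (Ne.symm hyx))) ?_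
      rw [← dist_eq_norm, dist_comm]
      exact (mem_ball.1 hy).le
  · rw [indicator_of_notMem hy]
    exact zero_le

lemma liminf_Fpot_div_pos [NeZero μ] {M t : ℝ} (hM : 0 ≤ M) (hMt : M ≤ t) :
    0 < liminf (fun r => Fpot M μ x r / ENNReal.ofReal (r ^ t)) (𝓝[>] 0) := by
  obtain ⟨N, hN⟩ := exists_pos_ball (μ := μ) x (NeZero.ne μ)
  have hR : (0 : ℝ) < N := by
    rcases Nat.eq_zero_or_pos N with rfl | hN0
    · simp at hN
    · exact_mod_cast hN0
  set R : ℝ := (N : ℝ)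
  have hc : 0 < μ (ball x R) * ENNReal.ofReal ((R ^ M)⁻¹) :=
    ENNReal.mul_pos hN.ne' (ENNReal.ofReal_pos.2 (by positivity)).ne'
  refine hc.trans_le (le_liminf_of_le (by isBoundedDefault) ?_)
  filter_upwards [Ioo_mem_nhdsGT (lt_min hR one_pos)] with r ⟨hr0, hr⟩
  have hrR : r ≤ R := hr.le.trans (min_le_left _ _)
  have hr1 : r ≤ 1 := hr.le.trans (min_le_right _ _)
  have hreal : (R ^ M)⁻¹ ≤ (r / R) ^ M / r ^ t := by
    rw [Real.div_rpow hr0.le hR.le, div_right_comm, ← Real.rpow_sub hr0, div_eq_mul_inv]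
    exact le_mul_of_one_le_left (by positivity)
      (Real.one_le_rpow_of_pos_of_le_one_of_nonpos hr0 hr1 (by linarith))
  calc μ (ball x R) * ENNReal.ofReal ((R ^ M)⁻¹)
      ≤ μ (ball x R) * ENNReal.ofReal ((r / R) ^ M / r ^ t) := by gcongr
    _ = μ (ball x R) * ENNReal.ofReal ((r / R) ^ M) / ENNReal.ofReal (r ^ t) := by
        rw [ENNReal.ofReal_div_of_pos (by positivity), mul_div_assoc]
    _ ≤ _ := by
        gcongr
        exact measure_ball_mul_le_Fpot hM hr0 hrR

lemma lt_of_ae_liminf_Fpot_div_eq_zero [NeZero μ] {M t : ℝ} (hM : 0 ≤ M)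
    (hae : ∀ᵐ x ∂μ, liminf (fun r => Fpot M μ x r / ENNReal.ofReal (r ^ t)) (𝓝[>] 0) = 0) :
    t < M := by
  by_contra! hMt
  obtain ⟨x, hx⟩ := hae.exists
  exact (liminf_Fpot_div_pos (x := x) hM hMt).ne' hx

lemma dimPtheta_nonneg (s θ : ℝ) : 0 ≤ dimPtheta s θ μ :=
  Real.sSup_nonneg fun _ ht => ht.1.1

lemma le_dimPtheta_of_le_Dcrit {a θ : ℝ} (h : a ≤ Dcrit n μ) (hθ : θ ∈ Ioo 0 1) :
    a ≤ dimPtheta n θ μ :=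
  h.trans (csInf_le ⟨0, by rintro _ ⟨θ', -, rfl⟩; exact dimPtheta_nonneg _ _⟩
    (mem_image_of_mem _ hθ))

lemma exists_lt_of_lt_dimPtheta {s θ t : ℝ} (ht : 0 ≤ t) (h : t < dimPtheta s θ μ) :
    ∃ t', t < t' ∧ t' ∈ Icc 0 s ∧ ∀ᵐ x ∂μ,
      liminf (fun r => Ftheta t' s θ μ x r / ENNReal.ofReal (r ^ t')) (𝓝[>] 0) = 0 := by
  have hne : {t' | t' ∈ Icc 0 s ∧ ∀ᵐ x ∂μ,
      liminf (fun r => Ftheta t' s θ μ x r / ENNReal.ofReal (r ^ t')) (𝓝[>] 0) = 0}.Nonempty :=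
    nonempty_iff_ne_empty.2 fun hemp => by
      rw [dimPtheta, hemp, Real.sSup_empty] at h
      linarith
  obtain ⟨t', ht', htt'⟩ := exists_lt_of_lt_csSup hne h
  exact ⟨t', htt', ht'⟩

lemma ae_liminf_Fpot_div_eq_zero_of_lt [IsProbabilityMeasure μ] {M t : ℝ}
    (hD : M ≤ Dcrit n μ) (ht : 0 ≤ t) (htM : t < M) :
    ∀ᵐ x ∂μ, liminf (fun r => Fpot M μ x r / ENNReal.ofReal (r ^ t)) (𝓝[>] 0) = 0 := by
  have hM : 0 < M := ht.trans_lt htM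
  -- any `θ ∈ (0,1)` with `t < (1 - θ) M` would do
  set θ := (M - t) / (2 * M)
  have hθ : θ ∈ Ioo 0 1 :=
    ⟨div_pos (by linarith) (by linarith), (div_lt_one (by linarith)).2 (by linarith)⟩
  have htθ : t < (1 - θ) * M := by
    have : (1 - θ) * M = (M + t) / 2 := by simp only [θ]; field_simp; ring
    linarith
  obtain ⟨t', htt', ⟨ht'0, ht's⟩, hae⟩ :=
    exists_lt_of_lt_dimPtheta ht (htM.trans_le (le_dimPtheta_of_le_Dcrit hD hθ))
  filter_upwards [hae] with x hx
  exact liminf_Fpot_div_eq_zero hM.le ht'0 ht's hθ.1.le hθ.2.le htt'.le htθ hx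

lemma setOf_liminf_Fpot_div_eq_Ico [IsProbabilityMeasure μ] {M : ℝ} (hM : 0 ≤ M)
    (hD : M ≤ Dcrit n μ) :
    {t : ℝ | 0 ≤ t ∧ ∀ᵐ x ∂μ,
      liminf (fun r => Fpot M μ x r / ENNReal.ofReal (r ^ t)) (𝓝[>] 0) = 0} = Ico 0 M := by
  ext t
  exact ⟨fun ⟨ht, hae⟩ => ⟨ht, lt_of_ae_liminf_Fpot_div_eq_zero hM hae⟩,
    fun ⟨ht, htM⟩ => ⟨ht, ae_liminf_Fpot_div_eq_zero_of_lt hD ht htM⟩⟩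

lemma dimPprofile_eq_of_le_Dcrit [IsProbabilityMeasure μ] {M : ℝ} (hM : 0 ≤ M)
    (hD : M ≤ Dcrit n μ) : dimPprofile M μ = M := by
  rw [dimPprofile, setOf_liminf_Fpot_div_eq_Ico hM hD]
  rcases hM.eq_or_lt with rfl | hM
  · simp
  · exact csSup_Ico hM

end Potentials

theorem statement8_general (n : ℕ) (μ : Measure (EuclideanSpace ℝ (Fin n))) [IsProbabilityMeasure μ]
    (m : ℕ) (hD : (m : ℝ) ≤ Dcrit n μ) :
    dimPprofile (m : ℝ) μ = m :=
  dimPprofile_eq_of_le_Dcrit (Nat.cast_nonneg m) hD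

/-- For a Borel probability measure `μ` with compact support on `ℝⁿ` and an
integer `1 ≤ m ≤ n`: if `m ≤ D(μ) = inf_{θ∈(0,1)} dim_{P,θ}^n μ`, then `dim_P^m μ = m`. -/
theorem statement8 (n : ℕ) (μ : Measure (EuclideanSpace ℝ (Fin n))) [IsProbabilityMeasure μ]
    (hE : IsCompact (msupp μ)) (m : ℕ) (hm : 1 ≤ m) (hmn : m ≤ n)
    (hD : (m : ℝ) ≤ Dcrit n μ) :
    dimPprofile (m : ℝ) μ = m :=
  statement8_general n μ m hD
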